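/- Let p₁,…,pₘ ∈ ℂ[x₁,…,xₘ] be polynomials of degrees d₁,…,dₘ. If the system p₁ = ⋯ = pₘ = 0 has only finitely many solutions in ℂᵐ, then the number of isolated solutions is at most ∏ᵢ dᵢ (the classical Bézout bound), in the case m = 2 for two plane curves of degrees d₁ and d₂ with finite intersection: the intersection has at most d₁·d₂ points. -/

import Mathlib

/-!
Let `S` be a finite set of common zeros, `N = #S`, `m = deg p`, `n = deg q`, and let `V_d` be the
space of polynomials of total degree `≤ d` in two variables, of dimension `(d + 1)(d + 2)/2`.
A non-constant polynomial in two variables over an algebraically closed field has infinitely many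
zeros, so finiteness of the common zero set forces `p` and `q` to be coprime. Coprimality gives
`p V_{n+N} ∩ q V_{m+N} ⊆ pq V_N`, hence `dim (p V_{n+N} + q V_{m+N}) ≥ dim V_{n+N} + dim V_{m+N} -
dim V_N`. On the other hand this sum lies in `V_{m+n+N}` and vanishes on `S`, and evaluation
`V_{m+n+N} → K^S` is onto by interpolation, so its dimension is at most `dim V_{m+n+N} - N`.
Comparing the two bounds gives `N ≤ mn`.
-/

open MvPolynomial Finset Module

namespace MvPolynomial

section ZeroSets

theorem infinite_setOf_eval_ne_zero {R σ : Type*} [CommRing R] [IsDomain R] [Infinite R]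
    [Nonempty σ] {c : MvPolynomial σ R} (hc : c ≠ 0) : {y : σ → R | eval y c ≠ 0}.Infinite := by
  classical
  -- if the set `A` where `c` does not vanish were finite, `c * ∏_{a ∈ A} (X i - a i)` would vanish
  -- everywhere
  intro hfin
  let i : σ := Classical.arbitrary σ
  let g := c * ∏ a ∈ hfin.toFinset, (X i - C (a i))
  have hg : g = 0 := MvPolynomial.funext fun y => by
    by_cases hy : eval y c = 0
    · simp [g, hy]
    · simp only [g, map_mul, map_prod, map_sub, eval_X, eval_C, map_zero]
      exact mul_eq_zero_of_right _ (prod_eq_zero (hfin.mem_toFinset.mpr hy) (sub_self _))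
  refine mul_ne_zero hc (prod_ne_zero_iff.mpr fun a _ h => ?_) hg
  simpa using congrArg (eval (Function.update a i (a i + 1))) h

variable {K : Type*} [Field K] [IsAlgClosed K] {n : ℕ}

theorem exists_eval_cons_eq_zero {f : MvPolynomial (Fin (n + 1)) K} (hf : 0 < degreeOf 0 f)
    {y : Fin n → K} (hy : eval y (finSuccEquiv K n f).leadingCoeff ≠ 0) :
    ∃ x, eval (Fin.cons x y) f = 0 := by
  have hdeg : (Polynomial.map (eval y) (finSuccEquiv K n f)).natDegree = degreeOf 0 f := by
    rw [Polynomial.natDegree_map_of_leadingCoeff_ne_zero _ hy, natDegree_finSuccEquiv]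
  obtain ⟨x, hx⟩ := IsAlgClosed.exists_root (Polynomial.map (eval y) (finSuccEquiv K n f))
    fun h => by
      have := Polynomial.natDegree_eq_zero_iff_degree_le_zero.mpr h.le
      omega
  exact ⟨x, by rw [eval_eq_eval_mv_eval']; exact hx⟩

theorem infinite_setOf_eval_eq_zero_of_degreeOf_zero_pos {f : MvPolynomial (Fin (n + 2)) K}
    (hf : 0 < degreeOf 0 f) : {x | eval x f = 0}.Infinite := by
  have hc : (finSuccEquiv K (n + 1) f).leadingCoeff ≠ 0 := by
    rw [Ne, Polynomial.leadingCoeff_eq_zero, EmbeddingLike.map_eq_zero_iff]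
    rintro rfl
    simp at hf
  choose! x hx using fun y (hy : eval y (finSuccEquiv K (n + 1) f).leadingCoeff ≠ 0) =>
    exists_eval_cons_eq_zero hf hy
  refine Set.infinite_of_injOn_mapsTo (f := fun y => Fin.cons (x y) y) ?_ (fun y hy => hx y hy)
    (infinite_setOf_eval_ne_zero hc)
  intro y _ y' _ h
  simpa using congrArg Fin.tail h

theorem infinite_setOf_eval_eq_zero_of_degreeOf_pos {f : MvPolynomial (Fin (n + 2)) K}
    {i : Fin (n + 2)} (hf : 0 < degreeOf i f) : {x | eval x f = 0}.Infinite := by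
  let e := Equiv.swap 0 i
  have hdeg : 0 < degreeOf 0 (rename e f) := by
    rwa [← e.apply_symm_apply 0, degreeOf_rename_of_injective e.injective, Equiv.symm_swap,
      Equiv.swap_apply_left]
  have hzeros : {x | eval x (rename e f) = 0} = (· ∘ e) ⁻¹' {x | eval x f = 0} := by
    ext x
    simp [eval_rename]
  intro hfin
  refine infinite_setOf_eval_eq_zero_of_degreeOf_zero_pos hdeg ?_
  rw [hzeros]
  exact hfin.preimage e.surjective.injective_comp_right.injOn

theorem infinite_setOf_eval_eq_zero_of_not_isUnit {f : MvPolynomial (Fin (n + 2)) K}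
    (hf : ¬IsUnit f) : {x | eval x f = 0}.Infinite := by
  by_cases hvars : f.vars = ∅
  · rw [vars_eq_empty_iff_eq_C] at hvars
    have hc : f.coeff 0 = 0 := by
      by_contra hc
      exact hf (hvars ▸ (Ne.isUnit hc).map C)
    rw [hvars, hc]
    simpa using Set.infinite_univ
  · obtain ⟨i, hi⟩ := nonempty_iff_ne_empty.mpr hvars
    exact infinite_setOf_eval_eq_zero_of_degreeOf_pos
      (Nat.pos_of_ne_zero (mem_vars_iff_degreeOf_ne_zero.mp hi))

theorem isRelPrime_of_finite_setOf_eval_eq_zero {p q : MvPolynomial (Fin (n + 2)) K}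
    (h : {x | eval x p = 0 ∧ eval x q = 0}.Finite) : IsRelPrime p q := by
  intro d ⟨a, hpa⟩ ⟨b, hqb⟩
  by_contra hd
  refine infinite_setOf_eval_eq_zero_of_not_isUnit hd (h.subset fun x hx => ?_)
  simp_all

end ZeroSets

section Interpolation

variable {K σ : Type*} [Field K]

theorem exists_totalDegree_lt_card_eval_eq [DecidableEq (σ → K)] {S : Finset (σ → K)}
    {s : σ → K} (hs : s ∈ S) :
    ∃ f : MvPolynomial σ K, f.totalDegree < #S ∧ ∀ t ∈ S, eval t f = if t = s then 1 else 0 := by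
  choose i hi using fun t : S.erase s => Function.ne_iff.mp (ne_of_mem_erase t.2)
  refine ⟨∏ t ∈ (S.erase s).attach, C (s (i t) - t.1 (i t))⁻¹ * (X (i t) - C (t.1 (i t))),
    ?_, fun t ht => ?_⟩
  · calc _ ≤ ∑ t ∈ (S.erase s).attach, 1 := by
          refine (totalDegree_finsetProd _ _).trans (sum_le_sum fun t _ => ?_)
          refine (totalDegree_mul _ _).trans ?_
          rw [totalDegree_C, zero_add]
          exact (totalDegree_sub_C_le _ _).trans (totalDegree_X _).le
      _ < #S := by simpa using card_erase_lt_of_mem hs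
  · simp only [map_prod, map_mul, map_sub, eval_C, eval_X]
    split_ifs with hts
    · subst hts
      exact prod_eq_one fun t _ => inv_mul_cancel₀ (sub_ne_zero.mpr (hi t).symm)
    · exact prod_eq_zero (mem_attach _ ⟨t, mem_erase.mpr ⟨hts, ht⟩⟩) (by simp)

noncomputable def evalOn (S : Finset (σ → K)) : MvPolynomial σ K →ₗ[K] S → K :=
  LinearMap.pi fun s => (aeval (s : σ → K)).toLinearMap

@[simp]
theorem evalOn_apply (S : Finset (σ → K)) (f : MvPolynomial σ K) (s : S) :
    evalOn S f s = eval (s : σ → K) f := by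
  simp [evalOn]

theorem surjective_evalOn_restrictTotalDegree {S : Finset (σ → K)} {d : ℕ} (hS : #S ≤ d + 1) :
    Function.Surjective ((evalOn S).comp (restrictTotalDegree σ K d).subtype) := by
  classical
  choose f hf using fun s : S => exists_totalDegree_lt_card_eval_eq s.2
  intro g
  refine ⟨⟨∑ s, g s • f s, sum_mem fun s _ => Submodule.smul_mem _ _ ?_⟩, ?_⟩
  · rw [mem_restrictTotalDegree]
    have := (hf s).1
    omega
  · ext t
    simp [smul_eval, (hf _).2 _ t.2]

theorem finrank_add_card_le [Finite σ] {S : Finset (σ → K)} {d : ℕ} (hS : #S ≤ d + 1)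
    {W : Submodule K (MvPolynomial σ K)} (hWd : W ≤ restrictTotalDegree σ K d)
    (hWS : W ≤ LinearMap.ker (evalOn S)) :
    finrank K W + #S ≤ finrank K (restrictTotalDegree σ K d) := by
  set V := restrictTotalDegree σ K d
  have hrank := LinearMap.finrank_range_add_finrank_ker ((evalOn S).comp V.subtype)
  rw [LinearMap.range_eq_top.mpr (surjective_evalOn_restrictTotalDegree hS), finrank_top,
    finrank_fintype_fun_eq_card, Fintype.card_coe] at hrank
  have hW : W.comap V.subtype ≤ LinearMap.ker ((evalOn S).comp V.subtype) := fun f hf =>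
    hWS hf
  have := Submodule.finrank_mono hW
  rw [(Submodule.comapSubtypeEquivOfLe hWd).finrank_eq] at this
  omega

end Interpolation

section Syzygies

variable {K σ : Type*} [Field K]

theorem finrank_map_mulLeft {p : MvPolynomial σ K} (hp : p ≠ 0)
    (W : Submodule K (MvPolynomial σ K)) : finrank K (W.map (LinearMap.mulLeft K p)) = finrank K W :=
  (Submodule.equivMapOfInjective _ (mul_right_injective₀ hp) W).finrank_eq.symm

theorem map_mulLeft_restrictTotalDegree_le (p : MvPolynomial σ K) {d d' : ℕ}
    (h : p.totalDegree + d ≤ d') :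
    (restrictTotalDegree σ K d).map (LinearMap.mulLeft K p) ≤ restrictTotalDegree σ K d' := by
  rintro _ ⟨a, ha, rfl⟩
  rw [SetLike.mem_coe, mem_restrictTotalDegree] at ha
  rw [LinearMap.mulLeft_apply, mem_restrictTotalDegree]
  exact (totalDegree_mul p a).trans (by omega)

theorem map_mulLeft_le_ker_evalOn {p : MvPolynomial σ K} {S : Finset (σ → K)}
    (hp : ∀ s ∈ S, eval s p = 0) (W : Submodule K (MvPolynomial σ K)) :
    W.map (LinearMap.mulLeft K p) ≤ LinearMap.ker (evalOn S) := by
  rintro _ ⟨a, -, rfl⟩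
  ext s
  simp [hp s s.2]

theorem map_mulLeft_inf_map_mulLeft_le {p q : MvPolynomial σ K} (h : IsRelPrime p q) (e : ℕ) :
    (restrictTotalDegree σ K (q.totalDegree + e)).map (LinearMap.mulLeft K p) ⊓
        (restrictTotalDegree σ K (p.totalDegree + e)).map (LinearMap.mulLeft K q) ≤
      (restrictTotalDegree σ K e).map (LinearMap.mulLeft K (p * q)) := by
  rintro _ ⟨⟨a, ha, rfl⟩, ⟨b, -, hab⟩⟩
  rw [SetLike.mem_coe, mem_restrictTotalDegree] at ha
  rw [LinearMap.mulLeft_apply, LinearMap.mulLeft_apply] at hab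
  obtain rfl | ha0 := eq_or_ne a 0
  · simp
  obtain ⟨c, rfl⟩ : q ∣ a := h.symm.dvd_of_dvd_mul_left ⟨b, hab.symm⟩
  have hq : q ≠ 0 := left_ne_zero_of_mul ha0
  rw [totalDegree_mul_of_isDomain hq (right_ne_zero_of_mul ha0)] at ha
  refine ⟨c, (mem_restrictTotalDegree _ _ _).mpr (by omega), ?_⟩
  rw [LinearMap.mulLeft_apply, LinearMap.mulLeft_apply, mul_assoc]

end Syzygies

section Dimension

variable {K : Type*} [Field K]

theorem finrank_restrictTotalDegree {σ : Type*} [Fintype σ] (d : ℕ) :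
    finrank K (restrictTotalDegree σ K d) =
      ∑ j ∈ range (d + 1), (Fintype.card σ + j - 1).choose j := by
  classical
  let M : Finset (σ →₀ ℕ) := (range (d + 1)).biUnion fun j => univ.finsuppAntidiag j
  have hM : (M : Set (σ →₀ ℕ)) = {m | (m.sum fun _ e => e) ≤ d} := by
    ext m
    simp [M, mem_finsuppAntidiag, Finsupp.sum_fintype]
  have hcard : #M = ∑ j ∈ range (d + 1), (Fintype.card σ + j - 1).choose j := by
    rw [card_biUnion]
    · simp [card_finsuppAntidiag_nat_eq_choose]
    · intro j _ k _ hjk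
      exact disjoint_left.mpr fun m hj hk => hjk ((mem_finsuppAntidiag.mp hj).1.symm.trans
        (mem_finsuppAntidiag.mp hk).1)
  rw [restrictTotalDegree, ← hM, finrank_eq_card_basis (basisRestrictSupport K _),
    ← hcard]
  exact Fintype.card_coe M

theorem two_mul_finrank_restrictTotalDegree_fin_two (d : ℕ) :
    2 * finrank K (restrictTotalDegree (Fin 2) K d) = (d + 1) * (d + 2) := by
  rw [finrank_restrictTotalDegree, Fintype.card_fin]
  induction d with
  | zero => simp
  | succ d ih =>
    rw [sum_range_succ, mul_add, ih, show 2 + (d + 1) - 1 = d + 2 by omega,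
      Nat.choose_succ_self_right]
    ring

end Dimension

theorem card_le_totalDegree_mul_totalDegree {K : Type*} [Field K] {p q : MvPolynomial (Fin 2) K}
    (h : IsRelPrime p q) {S : Finset (Fin 2 → K)}
    (hS : ∀ s ∈ S, eval s p = 0 ∧ eval s q = 0) : #S ≤ p.totalDegree * q.totalDegree := by
  obtain rfl | hp := eq_or_ne p 0
  · obtain rfl : S = ∅ := eq_empty_of_forall_notMem fun s hs =>
      ((isRelPrime_zero_left.mp h).map (eval s)).ne_zero (hS s hs).2
    simp
  obtain rfl | hq := eq_or_ne q 0
  · obtain rfl : S = ∅ := eq_empty_of_forall_notMem fun s hs =>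
      ((isRelPrime_zero_right.mp h).map (eval s)).ne_zero (hS s hs).1
    simp
  set m := p.totalDegree
  set n := q.totalDegree
  set N := #S
  let A := (restrictTotalDegree (Fin 2) K (n + N)).map (LinearMap.mulLeft K p)
  let B := (restrictTotalDegree (Fin 2) K (m + N)).map (LinearMap.mulLeft K q)
  have hsup : finrank K ↥(A ⊔ B) + N ≤ finrank K (restrictTotalDegree (Fin 2) K (m + n + N)) :=
    finrank_add_card_le (by omega)
      (sup_le (map_mulLeft_restrictTotalDegree_le p (by omega))
        (map_mulLeft_restrictTotalDegree_le q (by omega)))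
      (sup_le (map_mulLeft_le_ker_evalOn (fun s hs => (hS s hs).1) _)
        (map_mulLeft_le_ker_evalOn (fun s hs => (hS s hs).2) _))
  have hinf : finrank K ↥(A ⊓ B) ≤ finrank K (restrictTotalDegree (Fin 2) K N) :=
    (Submodule.finrank_mono (map_mulLeft_inf_map_mulLeft_le h N)).trans
      (Submodule.finrank_map_le _ _)
  have hsum := Submodule.finrank_sup_add_finrank_inf_eq A B
  rw [finrank_map_mulLeft hp, finrank_map_mulLeft hq] at hsum
  have h₁ := two_mul_finrank_restrictTotalDegree_fin_two (K := K) (m + n + N)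
  have h₂ := two_mul_finrank_restrictTotalDegree_fin_two (K := K) (n + N)
  have h₃ := two_mul_finrank_restrictTotalDegree_fin_two (K := K) (m + N)
  have h₄ := two_mul_finrank_restrictTotalDegree_fin_two (K := K) N
  -- `(m+n+N+1)(m+n+N+2) + (N+1)(N+2) = (n+N+1)(n+N+2) + (m+N+1)(m+N+2) + 2mn`
  nlinarith

end MvPolynomial

theorem bezout_plane_curves (p q : MvPolynomial (Fin 2) ℂ)
    (hfin : {x : Fin 2 → ℂ | eval x p = 0 ∧ eval x q = 0}.Finite) :
    {x : Fin 2 → ℂ | eval x p = 0 ∧ eval x q = 0}.ncard ≤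
      p.totalDegree * q.totalDegree := by
  rw [Set.ncard_eq_toFinset_card _ hfin]
  exact card_le_totalDegree_mul_totalDegree (isRelPrime_of_finite_setOf_eval_eq_zero hfin)
    fun s hs => hfin.mem_toFinset.mp hs
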